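/- arXiv:1805.09312 — 3 statements merged into one kernel-verified Lean document; each statement's English description precedes it below -/
import Mathlib

section
/- The Koranyi inversion on the Heisenberg group satisfies d(ι(h), ι(h')) = d(h,h') / (‖h‖ · ‖h'‖) for all nonzero h, h' in the Heisenberg group. -/
/-- The Heisenberg group law on `ℂ × ℝ`. -/
noncomputable def hMul (p q : ℂ × ℝ) : ℂ × ℝ :=
  (p.1 + q.1, p.2 + q.2 + 2 * ((starRingEnd ℂ) p.1 * q.1).im)

/-- The Heisenberg group inverse. -/
def hInv (p : ℂ × ℝ) : ℂ × ℝ := (-p.1, -p.2)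

/-- The Koranyi heisGauge. -/
noncomputable def heisGauge (p : ℂ × ℝ) : ℝ :=
  (‖p.1‖ ^ 4 + p.2 ^ 2) ^ ((1 : ℝ) / 4)

/-- The Cygan metric. -/
noncomputable def cygan (p q : ℂ × ℝ) : ℝ := heisGauge (hMul (hInv p) q)

/-- The Koranyi inversion. -/
noncomputable def koranyiInv (p : ℂ × ℝ) : ℂ × ℝ :=
  (-p.1 / (((‖p.1‖ ^ 2 : ℝ) : ℂ) + (p.2 : ℂ) * Complex.I),
    -p.2 / (‖p.1‖ ^ 4 + p.2 ^ 2))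

/-!
With `ν(z, t) = |z|² + i t` one has `‖p‖ = |ν p|^(1/2)`,
`d(p, q) = |conj (ν p) + ν q - 2 conj z z'|^(1/2)`, `ι(z, t) = (-z / ν, _)` and `ν (ι p) = (ν p)⁻¹`.
Substituting, the expression inside `d(ι p, ι q)` is the one inside `d(p, q)` divided by
`conj (ν p) * ν q`, whose modulus is `‖p‖² ‖q‖²`.
-/

open ComplexConjugate

noncomputable def complexGauge (p : ℂ × ℝ) : ℂ :=
  ((‖p.1‖ ^ 2 : ℝ) : ℂ) + (p.2 : ℂ) * Complex.I

lemma complexGauge_re (p : ℂ × ℝ) : (complexGauge p).re = ‖p.1‖ ^ 2 := by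
  simp [complexGauge, -Complex.ofReal_pow]

lemma complexGauge_im (p : ℂ × ℝ) : (complexGauge p).im = p.2 := by
  simp [complexGauge, -Complex.ofReal_pow]

lemma normSq_complexGauge (p : ℂ × ℝ) :
    Complex.normSq (complexGauge p) = ‖p.1‖ ^ 4 + p.2 ^ 2 := by
  rw [complexGauge, Complex.normSq_add_mul_I]
  ring

lemma heisGauge_eq_sqrt_norm_complexGauge (p : ℂ × ℝ) :
    heisGauge p = √‖complexGauge p‖ := by
  rw [Complex.norm_def, normSq_complexGauge, Real.sqrt_eq_rpow, Real.sqrt_eq_rpow,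
    ← Real.rpow_mul (by positivity), heisGauge]
  norm_num

lemma complexGauge_ne_zero {p : ℂ × ℝ} (hp : p ≠ (0, 0)) : complexGauge p ≠ 0 := by
  intro h
  have hre := congrArg Complex.re h
  have him := congrArg Complex.im h
  simp only [complexGauge_re, complexGauge_im, Complex.zero_re, Complex.zero_im] at hre him
  exact hp (Prod.ext (by simpa using hre) him)

lemma koranyiInv_fst (p : ℂ × ℝ) : (koranyiInv p).1 = -p.1 / complexGauge p := rfl

lemma complexGauge_koranyiInv (p : ℂ × ℝ) :
    complexGauge (koranyiInv p) = (complexGauge p)⁻¹ := by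
  have hnorm : ‖(koranyiInv p).1‖ ^ 2 = ‖p.1‖ ^ 2 / (‖p.1‖ ^ 4 + p.2 ^ 2) := by
    rw [koranyiInv_fst, norm_div, norm_neg, div_pow, Complex.sq_norm (complexGauge p),
      normSq_complexGauge]
  apply Complex.ext
  · rw [complexGauge_re, hnorm, Complex.inv_re, normSq_complexGauge, complexGauge_re]
  · rw [complexGauge_im, Complex.inv_im, normSq_complexGauge, complexGauge_im]
    rfl

lemma cygan_eq_sqrt_norm (p q : ℂ × ℝ) :
    cygan p q = √‖conj (complexGauge p) + complexGauge q - 2 * conj p.1 * q.1‖ := by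
  rw [cygan, heisGauge_eq_sqrt_norm_complexGauge]
  congr 3
  apply Complex.ext <;>
    simp [hMul, hInv, complexGauge, Complex.sq_norm, Complex.normSq_apply] <;>
    ring

lemma conj_inv_add_inv_sub {a b : ℂ} (ha : a ≠ 0) (hb : b ≠ 0) (z w : ℂ) :
    conj a⁻¹ + b⁻¹ - 2 * conj (-z / a) * (-w / b) =
      (conj a + b - 2 * conj z * w) / (conj a * b) := by
  have hca : conj a ≠ 0 := (map_ne_zero _).mpr ha
  simp only [map_inv₀, map_div₀, map_neg]
  field_simp
  ring

/-- The Koranyi inversion satisfies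
`d(ι h, ι h') = d(h,h') / (‖h‖·‖h'‖)` for nonzero `h, h'`. -/
theorem cygan_koranyiInv (h h' : ℂ × ℝ) (hh : h ≠ (0, 0)) (hh' : h' ≠ (0, 0)) :
    cygan (koranyiInv h) (koranyiInv h') = cygan h h' / (heisGauge h * heisGauge h') := by
  rw [cygan_eq_sqrt_norm, cygan_eq_sqrt_norm, heisGauge_eq_sqrt_norm_complexGauge,
    heisGauge_eq_sqrt_norm_complexGauge, complexGauge_koranyiInv, complexGauge_koranyiInv,
    koranyiInv_fst, koranyiInv_fst,
    conj_inv_add_inv_sub (complexGauge_ne_zero hh) (complexGauge_ne_zero hh'),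
    norm_div, norm_mul, Complex.norm_conj, Real.sqrt_div' _ (by positivity),
    Real.sqrt_mul (norm_nonneg _)]
end

section
/- Let T : X → X be a measurable transformation of a measure space (X,μ) with μ(X) > 0, and suppose T is conservative and nonsingular. Suppose C ⊆ X has positive measure and X = ⋃_{i≥0} T^{-i} C up to null sets. If the induced (first-return) transformation of T on C is ergodic, then T is ergodic on X. -/
open MeasureTheory

/-- The first return time of `x` to `C` under `T` (0 if there is no return). -/
noncomputable def returnTime {X : Type*} (T : X → X) (C : Set X) (x : X) : ℕ := by
  classical exact if h : ∃ n, 0 < n ∧ T^[n] x ∈ C then Nat.find h else 0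

/-- The transformation induced by `T` on `C` (the first-return map). -/
noncomputable def inducedMap {X : Type*} (T : X → X) (C : Set X) (x : X) : X :=
  T^[returnTime T C x] x

/-!
A strictly `T`-invariant set `s` is also invariant under the first-return map, so `s ∩ C` is an
invariant set of the induced system and is null or conull in `C`. Since almost every orbit
visits `C`, nonsingularity spreads this to `s` (or to `sᶜ`): `s` meets each `T⁻ⁱ C` in
`T⁻ⁱ (s ∩ C)`. Strictly invariant sets suffice: for a nonsingular map every almost invariant
set agrees with a strictly invariant one up to a null set.
-/

theorem MeasureTheory.Measure.QuasiMeasurePreserving.of_preimage_null {α β : Type*} [MeasurableSpace α]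
    [MeasurableSpace β] {μa : Measure α} {μb : Measure β} {f : α → β} (hf : Measurable f)
    (h : ∀ s, MeasurableSet s → μb s = 0 → μa (f ⁻¹' s) = 0) :
    Measure.QuasiMeasurePreserving f μa μb :=
  ⟨hf, Measure.AbsolutelyContinuous.mk fun s hs hs0 => by
    rw [Measure.map_apply hf hs]; exact h s hs hs0⟩

section InducedMap

variable {X : Type*} {T : X → X} {C s : Set X} {x : X}

theorem inducedMap_mem (h : ∃ n, 0 < n ∧ T^[n] x ∈ C) : inducedMap T C x ∈ C := by
  classical
  simp only [inducedMap, returnTime, dif_pos h]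
  exact (Nat.find_spec h).2

theorem preimage_inducedMap_of_preimage_eq (hs : T ⁻¹' s = s) :
    inducedMap T C ⁻¹' s = s := by
  ext x
  change x ∈ T^[returnTime T C x] ⁻¹' s ↔ x ∈ s
  rw [Function.IsFixedPt.preimage_iterate hs]

variable [MeasurableSpace X] {μ : Measure X}

theorem measure_symmDiff_preimage_inducedMap_inter_null (hC : MeasurableSet C)
    (hret : ∀ᵐ x ∂μ.restrict C, ∃ n, 0 < n ∧ T^[n] x ∈ C) (hs : T ⁻¹' s = s) :
    μ (symmDiff (inducedMap T C ⁻¹' (s ∩ C)) (s ∩ C) ∩ C) = 0 := by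
  rw [measure_eq_zero_iff_ae_notMem]
  filter_upwards [(ae_restrict_iff' hC).mp hret] with x hx
  rintro ⟨hxs, hxC⟩
  have hψ : inducedMap T C x ∈ C := inducedMap_mem (hx hxC)
  rw [Set.preimage_inter, preimage_inducedMap_of_preimage_eq hs] at hxs
  simp [Set.mem_symmDiff, hxC, hψ] at hxs

theorem measure_null_of_preimage_eq_of_inter_null (hT : Measure.QuasiMeasurePreserving T μ μ)
    (hcover : μ (Set.univ \ ⋃ i : ℕ, T^[i] ⁻¹' C) = 0) (hs : T ⁻¹' s = s)
    (hsC : μ (s ∩ C) = 0) : μ s = 0 := by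
  have hsub : s ⊆ (Set.univ \ ⋃ i : ℕ, T^[i] ⁻¹' C) ∪ ⋃ i : ℕ, T^[i] ⁻¹' (s ∩ C) := by
    intro x hx
    by_cases hvisit : x ∈ ⋃ i : ℕ, T^[i] ⁻¹' C
    · obtain ⟨i, hi⟩ := Set.mem_iUnion.mp hvisit
      refine Or.inr (Set.mem_iUnion.mpr ⟨i, ?_, hi⟩)
      rwa [← Set.mem_preimage, Function.IsFixedPt.preimage_iterate hs]
    · exact Or.inl ⟨trivial, hvisit⟩
  refine measure_mono_null hsub (measure_union_null hcover ?_)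
  exact measure_iUnion_null fun i => (hT.iterate i).preimage_null hsC

theorem preErgodic_of_inducedMap (hT : Measure.QuasiMeasurePreserving T μ μ)
    (hC : MeasurableSet C) (hcover : μ (Set.univ \ ⋃ i : ℕ, T^[i] ⁻¹' C) = 0)
    (hret : ∀ᵐ x ∂μ.restrict C, ∃ n, 0 < n ∧ T^[n] x ∈ C)
    (herg : ∀ B : Set X, MeasurableSet B → B ⊆ C →
      μ (symmDiff (inducedMap T C ⁻¹' B) B ∩ C) = 0 → μ B = 0 ∨ μ (C \ B) = 0) :
    PreErgodic T μ := by
  refine ⟨fun s hsm hs => Filter.eventuallyConst_set'.mpr ?_⟩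
  rcases herg (s ∩ C) (hsm.inter hC) Set.inter_subset_right
    (measure_symmDiff_preimage_inducedMap_inter_null hC hret hs) with hsC | hsC
  · exact Or.inl (ae_eq_empty.mpr (measure_null_of_preimage_eq_of_inter_null hT hcover hs hsC))
  · have hcompl : T ⁻¹' sᶜ = sᶜ := by rw [Set.preimage_compl, hs]
    rw [Set.sdiff_inter_self_eq_sdiff, Set.sdiff_eq, Set.inter_comm] at hsC
    exact Or.inr (ae_eq_univ.mpr
      (measure_null_of_preimage_eq_of_inter_null hT hcover hcompl hsC))

end InducedMap

theorem ergodic_of_induced_ergodic_general {X : Type*} [MeasurableSpace X] (μ : Measure X)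
    (T : X → X) (hT : Measurable T)
    (hns : ∀ A : Set X, MeasurableSet A → μ A = 0 → μ (T ⁻¹' A) = 0)
    (C : Set X) (hC : MeasurableSet C)
    (hcover : μ (Set.univ \ ⋃ i : ℕ, T^[i] ⁻¹' C) = 0)
    (hret : ∀ᵐ x ∂μ.restrict C, ∃ n, 0 < n ∧ T^[n] x ∈ C)
    (herg : ∀ B : Set X, MeasurableSet B → B ⊆ C →
      μ (symmDiff (inducedMap T C ⁻¹' B) B ∩ C) = 0 → μ B = 0 ∨ μ (C \ B) = 0) :
    ∀ B : Set X, MeasurableSet B → μ (symmDiff (T ⁻¹' B) B) = 0 →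
      μ B = 0 ∨ μ (Set.univ \ B) = 0 := by
  intro B hBm hB
  have hqmp := Measure.QuasiMeasurePreserving.of_preimage_null hT hns
  have hergodic : QuasiErgodic T μ :=
    { hqmp, preErgodic_of_inducedMap hqmp hC hcover hret herg with }
  rcases hergodic.ae_empty_or_univ₀ hBm.nullMeasurableSet
    (measure_symmDiff_eq_zero_iff.mp hB) with hB0 | hBuniv
  · exact Or.inl (ae_eq_empty.mp hB0)
  · exact Or.inr (by simpa [Set.compl_eq_univ_sdiff] using ae_eq_univ.mp hBuniv)

/-- If `T` is conservative and nonsingular on a measure space of positive measure,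
`C` has positive measure, `X = ⋃ᵢ T⁻ⁱ C` up to null sets, almost every point of `C`
returns to `C`, and the induced first-return transformation on `C` is ergodic, then
`T` is ergodic. -/
theorem ergodic_of_induced_ergodic {X : Type*} [MeasurableSpace X] (μ : Measure X)
    (T : X → X) (hT : Measurable T) (hcons : Conservative T μ)
    (hns : ∀ A : Set X, MeasurableSet A → μ A = 0 → μ (T ⁻¹' A) = 0)
    (hX : 0 < μ Set.univ)
    (C : Set X) (hC : MeasurableSet C) (hCpos : 0 < μ C)
    (hcover : μ (Set.univ \ ⋃ i : ℕ, T^[i] ⁻¹' C) = 0)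
    (hret : ∀ᵐ x ∂μ.restrict C, ∃ n, 0 < n ∧ T^[n] x ∈ C)
    (herg : ∀ B : Set X, MeasurableSet B → B ⊆ C →
      μ (symmDiff (inducedMap T C ⁻¹' B) B ∩ C) = 0 → μ B = 0 ∨ μ (C \ B) = 0) :
    ∀ B : Set X, MeasurableSet B → μ (symmDiff (T ⁻¹' B) B) = 0 →
      μ B = 0 ∨ μ (Set.univ \ B) = 0 :=
  ergodic_of_induced_ergodic_general μ T hT hns C hC hcover hret herg
end

section
/- Let T : K → K be measurable on a probability space and suppose T is measurably isomorphic to a skew product T_c ⋊ f on K_c × R over an ergodic transformation T_c on K_c, where R is a finite set of cardinality n and f(z,·) : R → R is a bijection for a.e. z. Then every T-invariant positive-measure subset A of K satisfies μ(A) ≥ 1/n (with respect to the product of the T_c-quasi-invariant measure on K_c, normalized, and normalized counting measure on R). Consequently, T has at most n ergodic components. -/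
/-!
The projection `B = Prod.fst '' A` of an invariant set is the set of base points whose fibre
meets `A`. Since every point of `R` has positive mass, invariance of `A` modulo null sets
forces the fibre over `z` to be `(f z)⁻¹` of the fibre over `T_c z` for a.e. `z`; as `f z` is
onto, `B` is `T_c`-invariant modulo null sets. By ergodicity `B` is null, and then so is `A`,
or `B` is conull, and then a.e. fibre of `A` contains a point, of mass `1/n`.
-/

open MeasureTheory ENNReal Set

section

variable {K R : Type*}

def skewProduct (T : K → K) (f : K → R → R) : K × R → K × R := fun p => (T p.1, f p.1 p.2)

lemma preimage_prodMk_skewProduct_preimage (T : K → K) (f : K → R → R) (A : Set (K × R))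
    (z : K) : Prod.mk z ⁻¹' (skewProduct T f ⁻¹' A) = f z ⁻¹' (Prod.mk (T z) ⁻¹' A) :=
  rfl

lemma preimage_prodMk_nonempty_iff {A : Set (K × R)} {z : K} :
    (Prod.mk z ⁻¹' A).Nonempty ↔ z ∈ Prod.fst '' A := by
  simp [Set.Nonempty]

variable [MeasurableSpace K]

lemma measure_symmDiff_preimage_image_fst_eq_zero {μ : Measure K} {T : K → K} {f : K → R → R}
    (hf : ∀ᵐ z ∂μ, Function.Surjective (f z)) {A : Set (K × R)}
    (hA : ∀ᵐ z ∂μ, Prod.mk z ⁻¹' (skewProduct T f ⁻¹' A) = Prod.mk z ⁻¹' A) :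
    μ (symmDiff (T ⁻¹' (Prod.fst '' A)) (Prod.fst '' A)) = 0 := by
  rw [measure_symmDiff_eq_zero_iff, Filter.eventuallyEq_set]
  filter_upwards [hf, hA] with z hfz hAz
  rw [mem_preimage, ← preimage_prodMk_nonempty_iff, ← preimage_prodMk_nonempty_iff, ← hAz,
    preimage_prodMk_skewProduct_preimage, hfz.nonempty_preimage]

variable [MeasurableSpace R]

lemma measurableSet_image_fst_of_countable [Countable R] {A : Set (K × R)}
    (hA : MeasurableSet A) : MeasurableSet (Prod.fst '' A) := by
  have hunion : Prod.fst '' A = ⋃ r : R, (fun z => (z, r)) ⁻¹' A := by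
    ext z
    simp
  rw [hunion]
  exact .iUnion fun _ => measurable_prodMk_right hA

variable {μ : Measure K} {ν : Measure R}

lemma eq_empty_of_measure_eq_zero_of_forall_singleton (hν : ∀ r, ν {r} ≠ 0) {s : Set R}
    (hs : ν s = 0) : s = ∅ :=
  eq_empty_of_forall_notMem fun r hr => hν r (measure_mono_null (singleton_subset_iff.2 hr) hs)

lemma ae_preimage_prodMk_eq_of_measure_prod_symmDiff_eq_zero [SFinite ν]
    (hν : ∀ r, ν {r} ≠ 0) {A A' : Set (K × R)} (hA : MeasurableSet A) (hA' : MeasurableSet A')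
    (h : (μ.prod ν) (symmDiff A A') = 0) :
    ∀ᵐ z ∂μ, Prod.mk z ⁻¹' A = Prod.mk z ⁻¹' A' := by
  filter_upwards [(Measure.measure_prod_null (hA.symmDiff hA')).1 h] with z hz
  rw [← symmDiff_eq_bot, ← preimage_symmDiff]
  exact eq_empty_of_measure_eq_zero_of_forall_singleton hν hz

lemma measure_prod_eq_zero_iff_image_fst [SFinite ν] (hν : ∀ r, ν {r} ≠ 0)
    {A : Set (K × R)} (hA : MeasurableSet A) :
    (μ.prod ν) A = 0 ↔ μ (Prod.fst '' A) = 0 := by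
  rw [Measure.measure_prod_null hA, measure_eq_zero_iff_ae_notMem]
  refine Filter.eventually_congr (.of_forall fun z => ?_)
  show ν (Prod.mk z ⁻¹' A) = 0 ↔ _
  rw [← preimage_prodMk_nonempty_iff, not_nonempty_iff_eq_empty]
  exact ⟨eq_empty_of_measure_eq_zero_of_forall_singleton hν, fun h => by rw [h, measure_empty]⟩

lemma le_measure_prod_of_ae_mem_image_fst [IsProbabilityMeasure μ] [SFinite ν] {c : ℝ≥0∞}
    (hc : ∀ r, c ≤ ν {r}) {A : Set (K × R)} (hA : MeasurableSet A)
    (hB : ∀ᵐ z ∂μ, z ∈ Prod.fst '' A) : c ≤ (μ.prod ν) A := by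
  rw [Measure.prod_apply hA]
  calc c = ∫⁻ _, c ∂μ := by simp
    _ ≤ ∫⁻ z, ν (Prod.mk z ⁻¹' A) ∂μ := lintegral_mono_ae <| hB.mono
      fun _ ⟨⟨_, r⟩, hr, rfl⟩ => (hc r).trans (measure_mono (singleton_subset_iff.2 hr))

end

theorem skew_product_invariant_measure_bound_general
    {Kc : Type*} [MeasurableSpace Kc] (μc : Measure Kc) [IsProbabilityMeasure μc]
    {R : Type*} [Fintype R] [MeasurableSpace R] [MeasurableSingletonClass R]
    (Tc : Kc → Kc)
    (hTcerg : ∀ B : Set Kc, MeasurableSet B →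
      μc (symmDiff (Tc ⁻¹' B) B) = 0 → μc B = 0 ∨ μc Bᶜ = 0)
    (f : Kc → R → R)
    (hf : ∀ᵐ z ∂μc, Function.Bijective (f z))
    (S : Kc × R → Kc × R) (hS : S = fun p => (Tc p.1, f p.1 p.2))
    (hSmeas : Measurable S)
    (ν : Measure R) (hν : ν = ((Fintype.card R : ℝ≥0∞))⁻¹ • Measure.count)
    (A : Set (Kc × R)) (hA : MeasurableSet A)
    (hAinv : (μc.prod ν) (symmDiff (S ⁻¹' A) A) = 0)
    (hApos : 0 < (μc.prod ν) A) :
    ((Fintype.card R : ℝ≥0∞))⁻¹ ≤ (μc.prod ν) A := by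
  have hatom : ∀ r, ν {r} = (Fintype.card R : ℝ≥0∞)⁻¹ := by simp [hν]
  have hatom_ne : ∀ r, ν {r} ≠ 0 := by simp [hatom]
  have hfibre : ∀ᵐ z ∂μc, Prod.mk z ⁻¹' (skewProduct Tc f ⁻¹' A) = Prod.mk z ⁻¹' A := by
    subst hS
    exact ae_preimage_prodMk_eq_of_measure_prod_symmDiff_eq_zero hatom_ne (hSmeas hA) hA hAinv
  have hBinv := measure_symmDiff_preimage_image_fst_eq_zero (hf.mono fun _ h => h.2) hfibre
  rcases hTcerg _ (measurableSet_image_fst_of_countable hA) hBinv with hnull | hconull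
  · exact absurd ((measure_prod_eq_zero_iff_image_fst hatom_ne hA).2 hnull) hApos.ne'
  · exact le_measure_prod_of_ae_mem_image_fst (fun r => (hatom r).ge) hA (mem_ae_iff.2 hconull)

/-- Let `T = T_c ⋊ f` be a skew product on `K_c × R` over an ergodic transformation
`T_c` of a probability space, where `R` is finite with `n` elements and `f(z,·)` is a
bijection of `R` for a.e. `z`. With the product of the base measure and the normalized
counting measure on `R`, every `T`-invariant set of positive measure has measure at
least `1/n`. -/
theorem skew_product_invariant_measure_bound
    {Kc : Type*} [MeasurableSpace Kc] (μc : Measure Kc) [IsProbabilityMeasure μc]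
    {R : Type*} [Fintype R] [MeasurableSpace R] [MeasurableSingletonClass R]
    [Nonempty R]
    (Tc : Kc → Kc) (hTc : Measurable Tc)
    (hTcerg : ∀ B : Set Kc, MeasurableSet B →
      μc (symmDiff (Tc ⁻¹' B) B) = 0 → μc B = 0 ∨ μc Bᶜ = 0)
    (f : Kc → R → R)
    (hf : ∀ᵐ z ∂μc, Function.Bijective (f z))
    (S : Kc × R → Kc × R) (hS : S = fun p => (Tc p.1, f p.1 p.2))
    (hSmeas : Measurable S)
    (ν : Measure R) (hν : ν = ((Fintype.card R : ℝ≥0∞))⁻¹ • Measure.count)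
    (A : Set (Kc × R)) (hA : MeasurableSet A)
    (hAinv : (μc.prod ν) (symmDiff (S ⁻¹' A) A) = 0)
    (hApos : 0 < (μc.prod ν) A) :
    ((Fintype.card R : ℝ≥0∞))⁻¹ ≤ (μc.prod ν) A :=
  skew_product_invariant_measure_bound_general μc Tc hTcerg f hf S hS hSmeas ν hν A hA hAinv hApos
end
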